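/- Let 𝒢 be a signed graph with no half-edges that is unbalanced, i.e., 𝒢 contains a loop or a cycle with an odd number of positive edges. Then there exists an integer vector t ∈ ℤⁿ ∩ Z_𝒢^tr (where Z_𝒢^tr = Σ_{v∈Γ(𝒢)} [0, v]) such that t = x + ρ_𝒢 for some mean score sequence x of a random tournament on 𝒢, but t ≠ s + ρ_𝒢 for every score sequence s of a deterministic tournament on 𝒢 (indeed no deterministic score sequence even has the same coordinate sum as x). -/

import Mathlib

open Finset

/-- A signed graph on `[n]` with no half-edges: negative edges, positive edges
and loops. -/
structure SignedGraphNoHalf (n : ℕ) where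
  Eneg : Finset (Fin n × Fin n)
  Epos : Finset (Fin n × Fin n)
  L : Finset (Fin n)

/-- The score of player `i` under probabilities `pm, pp, pl`. -/
noncomputable def scoreSeq {n : ℕ} (G : SignedGraphNoHalf n)
    (pm pp : Fin n → Fin n → ℝ) (pl : Fin n → ℝ) (i : Fin n) : ℝ :=
  (∑ j ∈ univ.filter (fun j => (i, j) ∈ G.Eneg ∨ (j, i) ∈ G.Eneg), (pm i j - 1/2))
  + (∑ j ∈ univ.filter (fun j => (i, j) ∈ G.Epos ∨ (j, i) ∈ G.Epos), (pp i j - 1/2))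
  + (if i ∈ G.L then 2 * (pl i - 1/2) else 0)

/-- Probabilities forming a valid random tournament on `G`. -/
def IsTournament {n : ℕ} (G : SignedGraphNoHalf n)
    (pm pp : Fin n → Fin n → ℝ) (pl : Fin n → ℝ) : Prop :=
  (∀ i j, 0 ≤ pm i j ∧ pm i j ≤ 1) ∧
  (∀ i j, ((i, j) ∈ G.Eneg ∨ (j, i) ∈ G.Eneg) → pm i j = 1 - pm j i) ∧
  (∀ i j, 0 ≤ pp i j ∧ pp i j ≤ 1) ∧
  (∀ i j, pp i j = pp j i) ∧
  (∀ i, 0 ≤ pl i ∧ pl i ≤ 1)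

/-- `x` is the mean score sequence of a random tournament on `G`. -/
def IsMeanScoreSeq {n : ℕ} (G : SignedGraphNoHalf n) (x : Fin n → ℝ) : Prop :=
  ∃ pm pp pl, IsTournament G pm pp pl ∧ ∀ i, x i = scoreSeq G pm pp pl i

/-- `s` is the score sequence of a deterministic tournament on `G`. -/
def IsDetScoreSeq {n : ℕ} (G : SignedGraphNoHalf n) (s : Fin n → ℝ) : Prop :=
  ∃ pm pp pl, IsTournament G pm pp pl ∧
    (∀ i j, ((i, j) ∈ G.Eneg ∨ (j, i) ∈ G.Eneg) → (pm i j = 0 ∨ pm i j = 1)) ∧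
    (∀ i j, ((i, j) ∈ G.Epos ∨ (j, i) ∈ G.Epos) → (pp i j = 0 ∨ pp i j = 1)) ∧
    (∀ i, i ∈ G.L → (pl i = 0 ∨ pl i = 1)) ∧
    (∀ i, s i = scoreSeq G pm pp pl i)

/-- `ρ_𝒢 = (1/2) ∑_{v ∈ Γ(𝒢)} v`, realized as the score sequence with all
probabilities equal to `1`. -/
noncomputable def rho {n : ℕ} (G : SignedGraphNoHalf n) : Fin n → ℝ :=
  scoreSeq G (fun _ _ => 1) (fun _ _ => 1) (fun _ => 1)

/-- `G` contains a cycle with an odd number of positive edges. -/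
def HasOddPositiveCycle {n : ℕ} (G : SignedGraphNoHalf n) : Prop :=
  ∃ (m : ℕ) (v : Fin (m + 2) → Fin n) (sgn : Fin (m + 2) → Bool),
    Function.Injective v ∧
    (∀ k : Fin (m + 2),
      if sgn k then ((v k, v (k + 1)) ∈ G.Epos ∨ (v (k + 1), v k) ∈ G.Epos)
      else ((v k, v (k + 1)) ∈ G.Eneg ∨ (v (k + 1), v k) ∈ G.Eneg)) ∧
    (∀ k l : Fin (m + 2), k ≠ l →
      s(v k, v (k + 1)) = s(v l, v (l + 1)) → sgn k ≠ sgn l) ∧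
    (univ.filter (fun k => sgn k = true)).card % 2 = 1

/-!
Summing the scores, the negative edges cancel:
`∑ i, x i + #E⁺ + #L = ∑_{e ∈ E⁺} 2 p_e + ∑_{ℓ ∈ L} 2 p_ℓ`.
For a deterministic tournament the right-hand side is even, so it suffices to find a random
tournament whose sum is odd while `t = x + ρ` stays integral. Start from a deterministic
tournament and put probability `1/2` either on one loop or on every edge of a cycle with an odd
number of positive edges. Each vertex then meets an even number of halved edges (a halved loop
still adds `2 · 1/2` to `t`), so `t` stays integral, and the sum drops by an odd number.
-/

section Pairs

variable {α : Type*}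

theorem swap_not_mem_of_snd_lt [LinearOrder α] {E : Finset (α × α)}
    (hE : ∀ p ∈ E, p.2 < p.1) : ∀ p ∈ E, p.swap ∉ E :=
  fun p hp hp' => (hE p hp).not_gt (hE _ hp')

theorem injOn_mk_of_snd_lt [LinearOrder α] {E : Finset (α × α)}
    (hE : ∀ p ∈ E, p.2 < p.1) : Set.InjOn (fun p : α × α => s(p.1, p.2)) E := by
  intro p hp q hq h
  rcases Sym2.mk_eq_mk_iff.1 h with h | rfl
  · exact h
  · exact ((hE _ hp).not_gt (hE _ hq)).elim

theorem adj_of_mk_eq_mk {E : Finset (α × α)} {a b i j : α} (h : s(a, b) = s(i, j))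
    (hab : (a, b) ∈ E ∨ (b, a) ∈ E) : (i, j) ∈ E ∨ (j, i) ∈ E := by
  rcases Sym2.eq_iff.1 h with ⟨rfl, rfl⟩ | ⟨rfl, rfl⟩ <;> tauto

variable [DecidableEq α]

theorem card_filter_mem_mk_add_one {N : ℕ} [NeZero N] (v : Fin N → α)
    (hv : ∀ k, v k ≠ v (k + 1)) (i : α) :
    #{k | i ∈ s(v k, v (k + 1))} = 2 * #{k | v k = i} := by
  have shift : #{k | v (k + 1) = i} = #{k | v k = i} := by
    simp only [card_filter]
    exact Equiv.sum_comp (Equiv.addRight 1) fun k => if v k = i then 1 else 0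
  simp_rw [Sym2.mem_iff, eq_comm (a := i)]
  rw [filter_or, card_union_of_disjoint, shift, two_mul]
  exact disjoint_filter.2 fun k _ h h' => hv k (h.trans h'.symm)

theorem card_filter_mk_mem_eq_card {E : Finset (α × α)}
    (hE : Set.InjOn (fun p : α × α => s(p.1, p.2)) E) {H : Finset (Sym2 α)}
    (hH : ∀ i j, s(i, j) ∈ H → (i, j) ∈ E ∨ (j, i) ∈ E) :
    #{p ∈ E | s(p.1, p.2) ∈ H} = #H := by
  rw [← card_image_of_injOn (hE.mono (filter_subset _ _))]
  congr 1
  ext e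
  induction e using Sym2.ind with
  | h i j =>
    simp only [mem_image, mem_filter]
    constructor
    · rintro ⟨p, ⟨-, hp⟩, hpe⟩
      exact hpe ▸ hp
    · intro he
      rcases hH i j he with h | h
      · exact ⟨_, ⟨h, he⟩, rfl⟩
      · exact ⟨_, ⟨h, Sym2.eq_swap ▸ he⟩, Sym2.eq_swap⟩

variable [Fintype α]

def adjFinset (E : Finset (α × α)) (i : α) : Finset α := {j | (i, j) ∈ E ∨ (j, i) ∈ E}

theorem sum_sum_adjFinset {M : Type*} [AddCommMonoid M] (E : Finset (α × α))
    (hE : ∀ p ∈ E, p.swap ∉ E) (g : α → α → M) :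
    ∑ i, ∑ j ∈ adjFinset E i, g i j = ∑ p ∈ E, (g p.1 p.2 + g p.2 p.1) := by
  have sum_filter_mem (f : α → α → M) :
      ∑ i, ∑ j, (if (i, j) ∈ E then f i j else 0) = ∑ p ∈ E, f p.1 p.2 := by
    rw [← Fintype.sum_prod_type' (fun i j => if (i, j) ∈ E then f i j else 0),
      sum_ite_mem, univ_inter]
  have split (i : α) : ∑ j ∈ adjFinset E i, g i j =
      ∑ j, (if (i, j) ∈ E then g i j else 0) + ∑ j, (if (j, i) ∈ E then g i j else 0) := by
    rw [adjFinset, filter_or, sum_union, sum_filter, sum_filter]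
    exact disjoint_filter.2 fun j _ h h' => hE _ h h'
  simp_rw [split, sum_add_distrib, sum_filter_mem g]
  rw [sum_comm (f := fun i j => if (j, i) ∈ E then g i j else 0), sum_filter_mem]

theorem filter_adjFinset_mk_mem {E : Finset (α × α)} {H : Finset (Sym2 α)}
    (hH : ∀ i j, s(i, j) ∈ H → (i, j) ∈ E ∨ (j, i) ∈ E) (i : α) :
    {j ∈ adjFinset E i | s(i, j) ∈ H} = ({j | s(i, j) ∈ H} : Finset α) := by
  ext j
  simpa [adjFinset] using hH i j

theorem card_filter_mk_mem_image {ι : Type*} [DecidableEq ι] (K : Finset ι) (f : ι → Sym2 α)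
    (hf : Set.InjOn f K) (i : α) : #{j | s(i, j) ∈ K.image f} = #{k ∈ K | i ∈ f k} := by
  have incidence : #{j | s(i, j) ∈ K.image f} = #{e ∈ K.image f | i ∈ e} := by
    refine card_bij (fun j _ => s(i, j)) (fun j hj => ?_) (fun j _ j' _ h => Sym2.congr_right.1 h)
      fun e he => ?_
    · simpa using (mem_filter.1 hj).2
    · obtain ⟨he, hie⟩ := mem_filter.1 he
      obtain ⟨j, rfl⟩ := Sym2.mem_iff_exists.1 hie
      exact ⟨j, by simpa using he, rfl⟩
  rw [incidence, filter_image, card_image_of_injOn (hf.mono (filter_subset _ _))]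

end Pairs

theorem sum_eq_card_filter_eq_one {ι : Type*} {s : Finset ι} {f : ι → ℝ}
    (h : ∀ a ∈ s, f a = 0 ∨ f a = 1) : ∑ a ∈ s, f a = #{a ∈ s | f a = 1} := by
  rw [← sum_boole]
  refine sum_congr rfl fun a ha => ?_
  rcases h a ha with h | h <;> simp [h]

section Scores

variable {n : ℕ} (G : SignedGraphNoHalf n)

theorem scoreSeq_eq_sum_adjFinset (pm pp : Fin n → Fin n → ℝ) (pl : Fin n → ℝ) (i : Fin n) :
    scoreSeq G pm pp pl i = ∑ j ∈ adjFinset G.Eneg i, (pm i j - 1/2)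
      + ∑ j ∈ adjFinset G.Epos i, (pp i j - 1/2) + (if i ∈ G.L then 2 * (pl i - 1/2) else 0) :=
  rfl

theorem scoreSeq_add_rho (pm pp : Fin n → Fin n → ℝ) (pl : Fin n → ℝ) (i : Fin n) :
    scoreSeq G pm pp pl i + rho G i = ∑ j ∈ adjFinset G.Eneg i, pm i j
      + ∑ j ∈ adjFinset G.Epos i, pp i j + (if i ∈ G.L then 2 * pl i else 0) := by
  simp only [rho, scoreSeq_eq_sum_adjFinset, sum_sub_distrib, sum_const, nsmul_eq_mul]
  split_ifs <;> ring

variable {G}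

theorem sum_scoreSeq (hne : ∀ p ∈ G.Eneg, p.2 < p.1) (hpe : ∀ p ∈ G.Epos, p.2 < p.1)
    {pm pp : Fin n → Fin n → ℝ} {pl : Fin n → ℝ} (htour : IsTournament G pm pp pl) :
    ∑ i, scoreSeq G pm pp pl i
      = ∑ p ∈ G.Epos, (2 * pp p.1 p.2 - 1) + ∑ i ∈ G.L, (2 * pl i - 1) := by
  obtain ⟨-, hanti, -, hsym, -⟩ := htour
  have neg_cancel : ∑ p ∈ G.Eneg, (pm p.1 p.2 - 1/2 + (pm p.2 p.1 - 1/2)) = 0 :=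
    sum_eq_zero fun p hp => by rw [hanti p.1 p.2 (Or.inl hp)]; ring
  simp only [scoreSeq_eq_sum_adjFinset]
  rw [sum_add_distrib, sum_add_distrib, sum_sum_adjFinset _ (swap_not_mem_of_snd_lt hne),
    sum_sum_adjFinset _ (swap_not_mem_of_snd_lt hpe), neg_cancel, zero_add, sum_ite_mem,
    univ_inter]
  congr 1 <;> refine sum_congr rfl fun p _ => ?_
  · rw [hsym p.2 p.1]; ring
  · ring

end Scores

section Witness

variable {n : ℕ} {G : SignedGraphNoHalf n}

theorem IsDetScoreSeq.exists_sum_eq (hne : ∀ p ∈ G.Eneg, p.2 < p.1)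
    (hpe : ∀ p ∈ G.Epos, p.2 < p.1) {s : Fin n → ℝ} (hs : IsDetScoreSeq G s) :
    ∃ z : ℤ, ∑ i, s i = 2 * z - (#G.Epos + #G.L) := by
  obtain ⟨pm, pp, pl, htour, -, hpp, hpl, hs⟩ := hs
  refine ⟨#{p ∈ G.Epos | pp p.1 p.2 = 1} + #{i ∈ G.L | pl i = 1}, ?_⟩
  rw [sum_congr rfl fun i _ => hs i, sum_scoreSeq hne hpe htour, sum_sub_distrib, sum_sub_distrib,
    ← mul_sum, ← mul_sum, sum_eq_card_filter_eq_one fun p hp => hpp p.1 p.2 (Or.inl hp),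
    sum_eq_card_filter_eq_one hpl]
  push_cast
  simp only [sum_const, nsmul_eq_mul, mul_one]
  ring

theorem exists_witness_of_odd_sum (hne : ∀ p ∈ G.Eneg, p.2 < p.1)
    (hpe : ∀ p ∈ G.Epos, p.2 < p.1) {pm pp : Fin n → Fin n → ℝ} {pl : Fin n → ℝ}
    (htour : IsTournament G pm pp pl) (hint : ∀ i, ∃ z : ℤ, scoreSeq G pm pp pl i + rho G i = z)
    (hodd : ∃ z : ℤ, ∑ i, scoreSeq G pm pp pl i = 2 * z + 1 - (#G.Epos + #G.L)) :
    ∃ (t x : Fin n → ℝ),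
      (∀ i, ∃ z : ℤ, t i = z) ∧
      IsMeanScoreSeq G x ∧
      (∀ i, t i = x i + rho G i) ∧
      (∀ s, IsDetScoreSeq G s →
        (∑ i, s i ≠ ∑ i, x i) ∧ (fun i => s i + rho G i) ≠ t) := by
  refine ⟨fun i => scoreSeq G pm pp pl i + rho G i, scoreSeq G pm pp pl, hint,
    ⟨pm, pp, pl, htour, fun _ => rfl⟩, fun _ => rfl, fun s hs => ?_⟩
  have hsum : ∑ i, s i ≠ ∑ i, scoreSeq G pm pp pl i := by
    obtain ⟨a, ha⟩ := hs.exists_sum_eq hne hpe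
    obtain ⟨b, hb⟩ := hodd
    rw [ha, hb]
    intro h
    have : 2 * a = 2 * b + 1 := by exact_mod_cast (by linarith : (2 * a : ℝ) = 2 * b + 1)
    omega
  exact ⟨hsum, fun ht => hsum (sum_congr rfl fun i _ => by simpa using congrFun ht i)⟩

end Witness

section Halving

variable {n : ℕ} (Hneg Hpos : Finset (Sym2 (Fin n))) (Hloop : Finset (Fin n))

noncomputable def halvedNegProb (i j : Fin n) : ℝ :=
  if s(i, j) ∈ Hneg then 1/2 else if j < i then 1 else 0

noncomputable def halvedPosProb (i j : Fin n) : ℝ := if s(i, j) ∈ Hpos then 1/2 else 1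

noncomputable def halvedLoopProb (i : Fin n) : ℝ := if i ∈ Hloop then 1/2 else 1

variable {G : SignedGraphNoHalf n}

theorem isTournament_halved (hne : ∀ p ∈ G.Eneg, p.2 < p.1) :
    IsTournament G (halvedNegProb Hneg) (halvedPosProb Hpos) (halvedLoopProb Hloop) := by
  refine ⟨fun i j => ?_, fun i j hij => ?_, fun i j => ?_, fun i j => ?_, fun i => ?_⟩
  · unfold halvedNegProb; split_ifs <;> norm_num
  · have hij : i ≠ j := by rcases hij with h | h; exacts [(hne _ h).ne', (hne _ h).ne]
    unfold halvedNegProb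
    rw [Sym2.eq_swap]
    by_cases hH : s(j, i) ∈ Hneg <;> rcases hij.lt_or_gt with h | h <;>
      simp [hH, h, h.not_gt] <;> norm_num
  · unfold halvedPosProb; split_ifs <;> norm_num
  · simp only [halvedPosProb, Sym2.eq_swap]
  · unfold halvedLoopProb; split_ifs <;> norm_num

theorem exists_scoreSeq_halved_add_rho_eq_int
    (heven : ∀ i, Even (#{j ∈ adjFinset G.Eneg i | s(i, j) ∈ Hneg}
      + #{j ∈ adjFinset G.Epos i | s(i, j) ∈ Hpos})) (i : Fin n) :
    ∃ z : ℤ, scoreSeq G (halvedNegProb Hneg) (halvedPosProb Hpos) (halvedLoopProb Hloop) i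
      + rho G i = z := by
  obtain ⟨r, hr⟩ := heven i
  obtain ⟨c, hc⟩ : ∃ c : ℕ, (if i ∈ G.L then 2 * halvedLoopProb Hloop i else 0) = c := by
    unfold halvedLoopProb
    split_ifs
    exacts [⟨1, by norm_num⟩, ⟨2, by norm_num⟩, ⟨0, by norm_num⟩]
  refine ⟨r + (#{j ∈ adjFinset G.Eneg i | s(i, j) ∉ Hneg ∧ j < i}
    + #{j ∈ adjFinset G.Epos i | s(i, j) ∉ Hpos} + c : ℕ), ?_⟩
  rw [scoreSeq_add_rho, hc]
  simp only [halvedNegProb, halvedPosProb, sum_ite, sum_const, filter_filter, nsmul_eq_mul]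
  have hr' : (#{j ∈ adjFinset G.Eneg i | s(i, j) ∈ Hneg} : ℝ)
      + #{j ∈ adjFinset G.Epos i | s(i, j) ∈ Hpos} = r + r := by exact_mod_cast hr
  push_cast
  linarith

theorem exists_sum_scoreSeq_halved_eq (hne : ∀ p ∈ G.Eneg, p.2 < p.1)
    (hpe : ∀ p ∈ G.Epos, p.2 < p.1)
    (hodd : Odd (#{p ∈ G.Epos | s(p.1, p.2) ∈ Hpos} + #{i ∈ G.L | i ∈ Hloop})) :
    ∃ z : ℤ, ∑ i, scoreSeq G (halvedNegProb Hneg) (halvedPosProb Hpos) (halvedLoopProb Hloop) i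
      = 2 * z + 1 - (#G.Epos + #G.L) := by
  obtain ⟨r, hr⟩ := hodd
  refine ⟨r + #{p ∈ G.Epos | s(p.1, p.2) ∉ Hpos} + #{i ∈ G.L | i ∉ Hloop}, ?_⟩
  rw [sum_scoreSeq hne hpe (isTournament_halved Hneg Hpos Hloop hne),
    ← card_filter_add_card_filter_not (s := G.Epos) (fun p => s(p.1, p.2) ∈ Hpos),
    ← card_filter_add_card_filter_not (s := G.L) (· ∈ Hloop)]
  simp only [halvedPosProb, halvedLoopProb, mul_ite, ite_sub, sum_ite, sum_const, nsmul_eq_mul]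
  have hr' : (#{p ∈ G.Epos | s(p.1, p.2) ∈ Hpos} : ℝ) + #{i ∈ G.L | i ∈ Hloop} = 2 * r + 1 := by
    exact_mod_cast hr
  push_cast
  linarith

theorem exists_witness_of_halving (hne : ∀ p ∈ G.Eneg, p.2 < p.1)
    (hpe : ∀ p ∈ G.Epos, p.2 < p.1)
    (heven : ∀ i, Even (#{j ∈ adjFinset G.Eneg i | s(i, j) ∈ Hneg}
      + #{j ∈ adjFinset G.Epos i | s(i, j) ∈ Hpos}))
    (hodd : Odd (#{p ∈ G.Epos | s(p.1, p.2) ∈ Hpos} + #{i ∈ G.L | i ∈ Hloop})) :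
    ∃ (t x : Fin n → ℝ),
      (∀ i, ∃ z : ℤ, t i = z) ∧
      IsMeanScoreSeq G x ∧
      (∀ i, t i = x i + rho G i) ∧
      (∀ s, IsDetScoreSeq G s →
        (∑ i, s i ≠ ∑ i, x i) ∧ (fun i => s i + rho G i) ≠ t) :=
  exists_witness_of_odd_sum hne hpe (isTournament_halved Hneg Hpos Hloop hne)
    (exists_scoreSeq_halved_add_rho_eq_int Hneg Hpos Hloop heven)
    (exists_sum_scoreSeq_halved_eq Hneg Hpos Hloop hne hpe hodd)

end Halving

theorem HasOddPositiveCycle.exists_halving {n : ℕ} {G : SignedGraphNoHalf n}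
    (hpe : ∀ p ∈ G.Epos, p.2 < p.1) (h : HasOddPositiveCycle G) :
    ∃ Hneg Hpos : Finset (Sym2 (Fin n)),
      (∀ i, Even (#{j ∈ adjFinset G.Eneg i | s(i, j) ∈ Hneg}
        + #{j ∈ adjFinset G.Epos i | s(i, j) ∈ Hpos})) ∧
      Odd #{p ∈ G.Epos | s(p.1, p.2) ∈ Hpos} := by
  obtain ⟨m, v, sgn, hinj, hedge, hdist, hodd⟩ := h
  set e : Fin (m + 2) → Sym2 (Fin n) := fun k => s(v k, v (k + 1))
  -- only injective on each sign class: a cycle of length 2 runs through one pair twice, once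
  -- with each sign
  have hinjOn (b : Bool) : Set.InjOn e ({k | sgn k = b} : Finset (Fin (m + 2))) :=
      fun k hk l hl hkl => by
    by_contra hkl'
    simp only [coe_filter, mem_univ, true_and, Set.mem_ofPred_eq] at hk hl
    exact hdist k l hkl' hkl (hk.trans hl.symm)
  have hadj (b : Bool) (i j : Fin n) (hij : s(i, j) ∈ image e {k | sgn k = b}) :
      if b then (i, j) ∈ G.Epos ∨ (j, i) ∈ G.Epos else (i, j) ∈ G.Eneg ∨ (j, i) ∈ G.Eneg := by
    obtain ⟨k, hk, hkij⟩ := mem_image.1 hij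
    obtain rfl : sgn k = b := by simpa using hk
    have := hedge k
    split_ifs at this ⊢ <;> exact adj_of_mk_eq_mk hkij this
  refine ⟨image e {k | sgn k = false}, image e {k | sgn k = true}, fun i => ?_, ?_⟩
  · rw [filter_adjFinset_mk_mem (hadj false), filter_adjFinset_mk_mem (hadj true),
      card_filter_mk_mem_image _ _ (hinjOn false), card_filter_mk_mem_image _ _ (hinjOn true)]
    have by_sign : #{k ∈ {k | sgn k = false} | i ∈ e k} + #{k ∈ {k | sgn k = true} | i ∈ e k}
        = #{k | i ∈ e k} := by
      rw [add_comm, ← card_filter_add_card_filter_not (s := {k | i ∈ e k}) (sgn · = true)]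
      simp only [filter_filter, and_comm, Bool.not_eq_true]
    rw [by_sign, card_filter_mem_mk_add_one v (fun k => hinj.ne (by simp)) i]
    exact even_two_mul _
  · rw [card_filter_mk_mem_eq_card (injOn_mk_of_snd_lt hpe) (hadj true),
      card_image_of_injOn (hinjOn true)]
    exact Nat.odd_iff.2 hodd

/-- If `𝒢` has no half-edges and is unbalanced (it has a loop or a cycle with
an odd number of positive edges), then some integer point of the translated
zonotope is only realizable randomly: indeed no deterministic score sequence
even has the same coordinate sum. -/
theorem unbalanced_integer_point_not_deterministic
    {n : ℕ} (G : SignedGraphNoHalf n)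
    (hne : ∀ p ∈ G.Eneg, p.2 < p.1) (hpe : ∀ p ∈ G.Epos, p.2 < p.1)
    (hunbal : G.L.Nonempty ∨ HasOddPositiveCycle G) :
    ∃ (t x : Fin n → ℝ),
      (∀ i, ∃ z : ℤ, t i = z) ∧
      IsMeanScoreSeq G x ∧
      (∀ i, t i = x i + rho G i) ∧
      (∀ s, IsDetScoreSeq G s →
        (∑ i, s i ≠ ∑ i, x i) ∧ (fun i => s i + rho G i) ≠ t) := by
  rcases hunbal with ⟨i₀, hi₀⟩ | hcycle
  · refine exists_witness_of_halving ∅ ∅ {i₀} hne hpe (fun i => by simp) ?_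
    simp [filter_eq', hi₀]
  · obtain ⟨Hneg, Hpos, heven, hodd⟩ := hcycle.exists_halving hpe
    exact exists_witness_of_halving Hneg Hpos ∅ hne hpe heven (by simpa using hodd)
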